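/- Let d ≥ 1, η > 0, ν > 0, and let F : ℂ → ℂ be holomorphic on the open strip {z : |Im z| < η}, continuous and bounded on the closed strip, with ‖F‖_∞ := sup_{|Im z| ≤ η} |F(z)|, and real-valued on ℝ. Let Λ ⊂ ℤ^d be a finite set, let H₀ be a Hermitian Λ×Λ complex matrix satisfying ∑_{n ∈ Λ} |H₀(m,n)| (e^{ν|m−n|} − 1) < η/2 for every m ∈ Λ, let λ ∈ ℝ, and let ω : Λ → ℝ be arbitrary. If |g| < η (1 − e^{−ν})^d / (72√2 ‖F‖_∞), then there exists a unique pair (V_↑, V_↓) of functions Λ → ℝ such that V_↑(n) = (F(H₀ + λ·diag(ω) + g·diag(V_↓)))(n,n) and V_↓(n) = (F(H₀ + λ·diag(ω) + g·diag(V_↑)))(n,n) for every n ∈ Λ. -/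

import Mathlib

/-!
The map `Φ : V ↦ diag f(A + g·diag V)` is a contraction of `ℓ²(Λ)` as soon as `|g|·Lip(f) < 1`.
Indeed the functional calculus of Hermitian matrices is `Lip(f)`-Lipschitz for the
Hilbert–Schmidt norm: after conjugating by the two eigenbases, `f(A) - f(B)` has entries
`(f λᵢ - f μⱼ) Wᵢⱼ` while `A - B` has entries `(λᵢ - μⱼ) Wᵢⱼ`; and the diagonal of a matrix has
`ℓ²` norm at most its Hilbert–Schmidt norm. Here `f = Re F` on `ℝ`, and the Cauchy estimate on
discs of radius `η` centred on the real axis gives `Lip(f) ≤ 2‖F‖_∞/η`, which the smallness of `g`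
makes less than `1/|g|`. The pair `(V_↑, V_↓)` is then the unique fixed point of the contraction
`(V₁, V₂) ↦ (Φ V₂, Φ V₁)` of `ℓ²(Λ)²`.
-/

/-- The ℓ¹ norm `|n| = |n₁| + … + |n_d|` on `ℤ^d`. -/
def znorm {d : ℕ} (x : Fin d → ℤ) : ℝ := ∑ i, |(x i : ℝ)|

open Complex Metric Matrix
open scoped NNReal

section Strip

variable {F : ℂ → ℂ} {η M : ℝ}

theorem norm_deriv_le_of_strip (hη : 0 < η) (hF : DifferentiableOn ℂ F {z : ℂ | |z.im| < η})
    (hM : ∀ z : ℂ, |z.im| ≤ η → ‖F z‖ ≤ M) (x : ℝ) :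
    ‖deriv F x‖ ≤ 2 * M / η := by
  have hball : ball (x : ℂ) η ⊆ {z : ℂ | |z.im| < η} := fun z hz => by
    simpa using (abs_im_le_norm (z - x)).trans_lt (mem_ball_iff_norm.mp hz)
  refine norm_deriv_le_div_of_mapsTo_ball (hF.mono hball) (fun z hz => ?_) hη
  rw [mem_closedBall_iff_norm, two_mul]
  exact (norm_sub_le _ _).trans
    (add_le_add (hM z (hball hz).le) (hM x (by simpa using hη.le)))

theorem lipschitzWith_comp_ofReal_of_strip (hη : 0 < η)
    (hF : DifferentiableOn ℂ F {z : ℂ | |z.im| < η}) (hM : ∀ z : ℂ, |z.im| ≤ η → ‖F z‖ ≤ M) :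
    LipschitzWith (2 * M / η).toNNReal fun x : ℝ => F x := by
  have hopen : IsOpen {z : ℂ | |z.im| < η} := isOpen_lt (by fun_prop) continuous_const
  refine lipschitzOnWith_univ.mp <| convex_univ.lipschitzOnWith_of_nnnorm_hasDerivWithin_le
    (f' := fun x : ℝ => deriv F x) (fun x _ => ?_) fun x _ => ?_
  · exact (hF.differentiableAt (hopen.mem_nhds (by simpa using hη))).hasDerivAt.comp_ofReal
      |>.hasDerivWithinAt
  · rw [← NNReal.coe_le_coe, coe_nnnorm]
    exact (norm_deriv_le_of_strip hη hF hM x).trans (Real.le_coe_toNNReal _)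

end Strip

theorem ContractingWith.existsUnique_eq_apply_swap {α : Type*} [MetricSpace α] [CompleteSpace α]
    [Nonempty α] {K : ℝ≥0} {f : α → α} (hf : ContractingWith K f) :
    ∃! p : α × α, p.1 = f p.2 ∧ p.2 = f p.1 := by
  have hT : ContractingWith K fun p : α × α => (f p.2, f p.1) :=
    ⟨hf.1, by
      simpa using (hf.2.comp LipschitzWith.prod_snd).prodMk (hf.2.comp LipschitzWith.prod_fst)⟩
  have hfix : ∀ p : α × α, Function.IsFixedPt (fun p : α × α => (f p.2, f p.1)) p ↔
      p.1 = f p.2 ∧ p.2 = f p.1 := fun p => by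
    simp only [Function.IsFixedPt, Prod.ext_iff, eq_comm]
  exact ⟨_, (hfix _).mp hT.fixedPoint_isFixedPt, fun p hp => hT.fixedPoint_unique ((hfix p).mpr hp)⟩

section Frobenius

attribute [local instance] frobeniusNormedAddCommGroup frobeniusNormSMulClass

namespace Matrix

variable {m n 𝕜 : Type*} [Fintype m] [Fintype n] [RCLike 𝕜]

theorem frobenius_norm_sq_eq_sum (M : Matrix m n 𝕜) : ‖M‖ ^ 2 = ∑ i, ∑ j, ‖M i j‖ ^ 2 := by
  rw [frobenius_norm_def, ← Real.sqrt_eq_rpow, Real.sq_sqrt (by positivity)]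
  simp only [Real.rpow_two]

theorem frobenius_norm_sq_eq_re_trace (M : Matrix m n 𝕜) :
    ‖M‖ ^ 2 = RCLike.re (Mᴴ * M).trace := by
  rw [frobenius_norm_sq_eq_sum, Finset.sum_comm]
  simp only [trace, diag_apply, mul_apply, conjTranspose_apply, map_sum, RCLike.star_def,
    RCLike.conj_mul, ← RCLike.ofReal_pow, RCLike.ofReal_re]

theorem frobenius_norm_unitary_mul [DecidableEq m] {U : Matrix m m 𝕜}
    (hU : U ∈ unitaryGroup m 𝕜) (M : Matrix m n 𝕜) : ‖U * M‖ = ‖M‖ := by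
  have hsq : ‖U * M‖ ^ 2 = ‖M‖ ^ 2 := by
    rw [frobenius_norm_sq_eq_re_trace, frobenius_norm_sq_eq_re_trace, conjTranspose_mul,
      Matrix.mul_assoc, ← Matrix.mul_assoc Uᴴ, ← star_eq_conjTranspose,
      Unitary.star_mul_self_of_mem hU, Matrix.one_mul]
  exact (pow_left_inj₀ (norm_nonneg _) (norm_nonneg _) two_ne_zero).mp hsq

theorem frobenius_norm_mul_unitary [DecidableEq n] {V : Matrix n n 𝕜}
    (hV : V ∈ unitaryGroup n 𝕜) (M : Matrix m n 𝕜) : ‖M * V‖ = ‖M‖ := by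
  rw [← frobenius_norm_conjTranspose, conjTranspose_mul, ← star_eq_conjTranspose V,
    frobenius_norm_unitary_mul (Unitary.star_mem hV), frobenius_norm_conjTranspose]

theorem frobenius_norm_sq_diagonal_mul_sub_mul_diagonal [DecidableEq m] [DecidableEq n]
    (a : m → ℝ) (b : n → ℝ) (W : Matrix m n 𝕜) :
    ‖diagonal (fun i => (a i : 𝕜)) * W - W * diagonal (fun j => (b j : 𝕜))‖ ^ 2 =
      ∑ i, ∑ j, (a i - b j) ^ 2 * ‖W i j‖ ^ 2 := by
  rw [frobenius_norm_sq_eq_sum]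
  refine Finset.sum_congr rfl fun i _ => Finset.sum_congr rfl fun j _ => ?_
  rw [sub_apply, diagonal_mul, mul_diagonal, mul_comm (W i j), ← sub_mul, ← RCLike.ofReal_sub,
    norm_mul, RCLike.norm_ofReal, mul_pow, sq_abs]

theorem norm_toLp_re_diag_le (M : Matrix n n 𝕜) :
    ‖WithLp.toLp 2 fun k => RCLike.re (M k k)‖ ≤ ‖M‖ := by
  refine le_of_pow_le_pow_left₀ two_ne_zero (norm_nonneg _) ?_
  rw [PiLp.norm_sq_eq_of_L2, frobenius_norm_sq_eq_sum]
  refine Finset.sum_le_sum fun k _ => ?_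
  calc ‖RCLike.re (M k k)‖ ^ 2 ≤ ‖M k k‖ ^ 2 := by
        gcongr
        exact RCLike.norm_re_le_norm _
    _ ≤ ∑ j, ‖M k j‖ ^ 2 :=
        Finset.single_le_sum (fun j _ => sq_nonneg ‖M k j‖) (Finset.mem_univ k)

variable [DecidableEq n]

theorem frobenius_norm_diagonal_ofReal (v : n → ℝ) :
    ‖diagonal fun k => (v k : 𝕜)‖ = ‖WithLp.toLp 2 v‖ := by
  simp [frobenius_norm_diagonal, PiLp.norm_eq_of_L2]

theorem star_mul_conj_sub_conj_mul {U V : Matrix n n 𝕜} (hU : star U * U = 1)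
    (hV : star V * V = 1) (D E : Matrix n n 𝕜) :
    star U * (U * D * star U - V * E * star V) * V = D * (star U * V) - star U * V * E := by
  simp only [Matrix.mul_sub, Matrix.sub_mul, Matrix.mul_assoc, hV, Matrix.mul_one]
  simp only [← Matrix.mul_assoc, hU, Matrix.one_mul]

variable {A B : Matrix n n 𝕜}

theorem frobenius_norm_sq_cfc_sub_cfc (hA : A.IsHermitian) (hB : B.IsHermitian) (f : ℝ → ℝ) :
    ‖cfc f A - cfc f B‖ ^ 2 = ∑ i, ∑ j, (f (hA.eigenvalues i) - f (hB.eigenvalues j)) ^ 2 *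
      ‖(star (hA.eigenvectorUnitary : Matrix n n 𝕜) * hB.eigenvectorUnitary) i j‖ ^ 2 := by
  have hU := hA.eigenvectorUnitary.2
  have hV := hB.eigenvectorUnitary.2
  rw [← frobenius_norm_sq_diagonal_mul_sub_mul_diagonal, ← frobenius_norm_mul_unitary hV,
    ← frobenius_norm_unitary_mul (Unitary.star_mem hU), hA.cfc_eq, hB.cfc_eq, IsHermitian.cfc,
    IsHermitian.cfc, Unitary.conjStarAlgAut_apply, Unitary.conjStarAlgAut_apply,
    ← Matrix.mul_assoc, star_mul_conj_sub_conj_mul (Unitary.star_mul_self_of_mem hU)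
      (Unitary.star_mul_self_of_mem hV)]
  rfl

theorem frobenius_norm_cfc_sub_cfc_le {K : ℝ≥0} {f : ℝ → ℝ} (hf : LipschitzWith K f)
    (hA : A.IsHermitian) (hB : B.IsHermitian) : ‖cfc f A - cfc f B‖ ≤ K * ‖A - B‖ := by
  refine le_of_pow_le_pow_left₀ two_ne_zero (by positivity) ?_
  conv_rhs => rw [mul_pow, ← cfc_id' ℝ A hA.isSelfAdjoint, ← cfc_id' ℝ B hB.isSelfAdjoint,
    frobenius_norm_sq_cfc_sub_cfc hA hB, Finset.mul_sum]
  rw [frobenius_norm_sq_cfc_sub_cfc hA hB]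
  refine Finset.sum_le_sum fun i _ => ?_
  rw [Finset.mul_sum]
  refine Finset.sum_le_sum fun j _ => ?_
  rw [← mul_assoc]
  gcongr ?_ * _
  rw [← mul_pow, sq_le_sq, abs_mul, NNReal.abs_eq, ← Real.dist_eq, ← Real.dist_eq]
  exact hf.dist_le_mul _ _

omit [Fintype n] in
theorem IsHermitian.add_smul_diagonal (hA : A.IsHermitian) (g : ℝ) (V : n → ℝ) :
    (A + (g : 𝕜) • diagonal fun k => (V k : 𝕜)).IsHermitian :=
  hA.add <| (isHermitian_diagonal_of_self_adjoint _ <| funext fun _ => RCLike.conj_ofReal _).smul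
    (RCLike.conj_ofReal g)

end Matrix

variable {n 𝕜 : Type*} [Fintype n] [DecidableEq n] [RCLike 𝕜]

noncomputable def effectivePotential (f : ℝ → ℝ) (A : Matrix n n 𝕜) (g : ℝ)
    (V : EuclideanSpace ℝ n) : EuclideanSpace ℝ n :=
  WithLp.toLp 2 fun k => RCLike.re (cfc f (A + (g : 𝕜) • diagonal fun k => (V k : 𝕜)) k k)

theorem lipschitzWith_effectivePotential {K : ℝ≥0} {f : ℝ → ℝ} (hf : LipschitzWith K f)
    {A : Matrix n n 𝕜} (hA : A.IsHermitian) (g : ℝ) :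
    LipschitzWith (‖g‖₊ * K) (effectivePotential f A g) := by
  refine LipschitzWith.of_dist_le_mul fun V W => ?_
  have hdiff : effectivePotential f A g V - effectivePotential f A g W = WithLp.toLp 2 fun k =>
      RCLike.re ((cfc f (A + (g : 𝕜) • diagonal fun k => (V k : 𝕜)) -
        cfc f (A + (g : 𝕜) • diagonal fun k => (W k : 𝕜))) k k) := by
    ext k
    simp [effectivePotential]
  rw [dist_eq_norm, dist_eq_norm, hdiff]
  calc _ ≤ _ := norm_toLp_re_diag_le _
    _ ≤ K * ‖(g : 𝕜) • diagonal fun k => ((V - W) k : 𝕜)‖ := by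
        convert frobenius_norm_cfc_sub_cfc_le hf (hA.add_smul_diagonal g V)
          (hA.add_smul_diagonal g W) using 3
        simp [← smul_sub, diagonal_sub]
    _ = ‖g‖₊ * K * ‖V - W‖ := by
        rw [norm_smul, RCLike.norm_ofReal, frobenius_norm_diagonal_ofReal, WithLp.toLp_ofLp,
          coe_nnnorm, Real.norm_eq_abs]
        ring

theorem coe_eq_cfc_apply_self_iff (f : ℝ → ℝ) (A : Matrix n n 𝕜) (g : ℝ) (u w : n → ℝ) :
    (∀ k, (u k : 𝕜) = cfc f (A + (g : 𝕜) • diagonal fun k => (w k : 𝕜)) k k) ↔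
      WithLp.toLp 2 u = effectivePotential f A g (WithLp.toLp 2 w) := by
  have hH : (cfc f (A + (g : 𝕜) • diagonal fun k => (w k : 𝕜))).IsHermitian := cfc_predicate _ _
  simp only [effectivePotential, WithLp.toLp.injEq, funext_iff]
  exact forall_congr' fun k => by rw [← RCLike.ofReal_inj (K := 𝕜), hH.coe_re_apply_self]

theorem existsUnique_selfConsistent_pair {K : ℝ≥0} {f : ℝ → ℝ} (hf : LipschitzWith K f)
    {A : Matrix n n 𝕜} (hA : A.IsHermitian) {g : ℝ} (hg : |g| * K < 1) :
    ∃! V : (n → ℝ) × (n → ℝ),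
      (∀ k, (V.1 k : 𝕜) = cfc f (A + (g : 𝕜) • diagonal fun k => (V.2 k : 𝕜)) k k) ∧
      (∀ k, (V.2 k : 𝕜) = cfc f (A + (g : 𝕜) • diagonal fun k => (V.1 k : 𝕜)) k k) := by
  have hΦ : ContractingWith (‖g‖₊ * K) (effectivePotential f A g) :=
    ⟨by rwa [← NNReal.coe_lt_coe, NNReal.coe_mul, coe_nnnorm, Real.norm_eq_abs, NNReal.coe_one],
      lipschitzWith_effectivePotential hf hA g⟩
  simp only [coe_eq_cfc_apply_self_iff]
  exact ((WithLp.equiv 2 (n → ℝ)).symm.prodCongr (WithLp.equiv 2 (n → ℝ)).symm)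
    |>.existsUnique_congr_right.mpr hΦ.existsUnique_eq_apply_swap

end Frobenius

theorem abs_mul_two_mul_div_lt_one {d : ℕ} {η ν g M : ℝ} (hη : 0 < η) (hν : 0 < ν) (hM : 0 ≤ M)
    (hg : |g| < η * (1 - Real.exp (-ν)) ^ d / (72 * √2 * M)) : |g| * (2 * M / η) < 1 := by
  rcases hM.eq_or_lt with rfl | hM
  · simp
  have hc : 0 ≤ 1 - Real.exp (-ν) := by linarith [Real.exp_le_one_iff.mpr (neg_nonpos.mpr hν.le)]
  have hcd : (1 - Real.exp (-ν)) ^ d ≤ 1 := pow_le_one₀ hc (by linarith [Real.exp_pos (-ν)])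
  have hs : 1 ≤ √2 := Real.one_le_sqrt.mpr one_le_two
  calc |g| * (2 * M / η) < η * (1 - Real.exp (-ν)) ^ d / (72 * √2 * M) * (2 * M / η) := by
        gcongr
    _ = (1 - Real.exp (-ν)) ^ d / (36 * √2) := by
        field_simp
        ring
    _ < 1 := by
        rw [div_lt_one (by positivity)]
        nlinarith

theorem hubbard_effective_potential_exists_unique_general
    (d : ℕ) (η ν lam g : ℝ) (hη : 0 < η) (hν : 0 < ν)
    (F : ℂ → ℂ)
    (hF_holo : DifferentiableOn ℂ F {z : ℂ | |z.im| < η})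
    (hF_bdd : ∃ M : ℝ, ∀ z : ℂ, |z.im| ≤ η → ‖F z‖ ≤ M)
    (Λ : Finset (Fin d → ℤ))
    (H₀ : Matrix Λ Λ ℂ) (hH₀ : H₀.IsHermitian)
    (ω : Λ → ℝ)
    (hg : |g| < η * (1 - Real.exp (-ν)) ^ d /
      (72 * Real.sqrt 2 * (⨆ z : {z : ℂ // |z.im| ≤ η}, ‖F z‖))) :
    ∃! V : (Λ → ℝ) × (Λ → ℝ),
      (∀ n : Λ,
        (V.1 n : ℂ) =
          cfc (fun x : ℝ => (F (x : ℂ)).re)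
            (H₀ + (lam : ℂ) • Matrix.diagonal (fun k : Λ => (ω k : ℂ))
              + (g : ℂ) • Matrix.diagonal (fun k : Λ => (V.2 k : ℂ))) n n) ∧
      (∀ n : Λ,
        (V.2 n : ℂ) =
          cfc (fun x : ℝ => (F (x : ℂ)).re)
            (H₀ + (lam : ℂ) • Matrix.diagonal (fun k : Λ => (ω k : ℂ))
              + (g : ℂ) • Matrix.diagonal (fun k : Λ => (V.1 k : ℂ))) n n) := by
  set M := ⨆ z : {z : ℂ // |z.im| ≤ η}, ‖F z‖
  have hM : ∀ z : ℂ, |z.im| ≤ η → ‖F z‖ ≤ M := by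
    obtain ⟨B, hB⟩ := hF_bdd
    exact fun z hz => le_ciSup (f := fun z : {z : ℂ // |z.im| ≤ η} => ‖F z‖)
      ⟨B, by rintro - ⟨z, rfl⟩; exact hB z z.2⟩ ⟨z, hz⟩
  have hM₀ : 0 ≤ M := Real.iSup_nonneg fun _ => norm_nonneg _
  have hf : LipschitzWith (2 * M / η).toNNReal fun x : ℝ => (F x).re := by
    simpa [Function.comp_def] using
      reCLM.lipschitz.comp (lipschitzWith_comp_ofReal_of_strip hη hF_holo hM)
  refine existsUnique_selfConsistent_pair hf (hH₀.add_smul_diagonal lam ω) ?_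
  rw [Real.coe_toNNReal _ (by positivity)]
  exact abs_mul_two_mul_div_lt_one hη hν hM₀ hg

/-- Existence and uniqueness of the pair of self-consistent effective potentials
`(V_↑, V_↓)` for the Hubbard model on a finite set `Λ ⊂ ℤ^d`, under the smallness
condition `|g| < η (1 - e^{-ν})^d / (72 √2 ‖F‖_∞)`. -/
theorem hubbard_effective_potential_exists_unique
    (d : ℕ) (hd : 1 ≤ d) (η ν lam g : ℝ) (hη : 0 < η) (hν : 0 < ν)
    (F : ℂ → ℂ)
    (hF_holo : DifferentiableOn ℂ F {z : ℂ | |z.im| < η})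
    (hF_cont : ContinuousOn F {z : ℂ | |z.im| ≤ η})
    (hF_bdd : ∃ M : ℝ, ∀ z : ℂ, |z.im| ≤ η → ‖F z‖ ≤ M)
    (hF_real : ∀ x : ℝ, (F (x : ℂ)).im = 0)
    (Λ : Finset (Fin d → ℤ))
    (H₀ : Matrix Λ Λ ℂ) (hH₀ : H₀.IsHermitian)
    (hdecay : ∀ m : Λ, ∑ n : Λ,
      ‖H₀ m n‖ * (Real.exp (ν * znorm ((m : Fin d → ℤ) - (n : Fin d → ℤ))) - 1)
        < η / 2)
    (ω : Λ → ℝ)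
    (hg : |g| < η * (1 - Real.exp (-ν)) ^ d /
      (72 * Real.sqrt 2 * (⨆ z : {z : ℂ // |z.im| ≤ η}, ‖F z‖))) :
    ∃! V : (Λ → ℝ) × (Λ → ℝ),
      (∀ n : Λ,
        (V.1 n : ℂ) =
          cfc (fun x : ℝ => (F (x : ℂ)).re)
            (H₀ + (lam : ℂ) • Matrix.diagonal (fun k : Λ => (ω k : ℂ))
              + (g : ℂ) • Matrix.diagonal (fun k : Λ => (V.2 k : ℂ))) n n) ∧
      (∀ n : Λ,
        (V.2 n : ℂ) =
          cfc (fun x : ℝ => (F (x : ℂ)).re)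
            (H₀ + (lam : ℂ) • Matrix.diagonal (fun k : Λ => (ω k : ℂ))
              + (g : ℂ) • Matrix.diagonal (fun k : Λ => (V.1 k : ℂ))) n n) :=
  hubbard_effective_potential_exists_unique_general d η ν lam g hη hν F hF_holo hF_bdd Λ H₀ hH₀ ω hg
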